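/- Consider the points x₀=(0,0), x₂=ε(1,0), x₄=ε(θ,1) in ℝ² and a C³ function h with h(xᵢ) = xᵢ·∇h(0) + ½ xᵢᵀ∇²h(0)xᵢ + O(ε³). Define yᵢ = (xᵢ, h(xᵢ)) ∈ ℝ³ and v(K) = ε⁻² (y₂ - y₀) × (y₄ - y₀). Let x₅ = ε(θ-1, 1), y₅ = (x₅, h(x₅)) and v(K₃) = ε⁻² (y₄ - y₀) × (y₅ - y₀). Then |v(K) - v(K₃)|² = ε²( θ²|(θ-1)∂₁₁h(0) + ∂₁₂h(0)|² + |(θ-1)∂₁₁h(0) + ∂₁₂h(0)|² ) + O(ε³). -/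

import Mathlib

/-!
Since `x₂ + x₅ = x₄`, the difference `v(K) - v(K₃)` is a multiple of `(1, -θ, 0)` by the second
difference `δ = h(x₄) - h(x₂) - h(x₅) + h(x₀)` divided by `ε`, so
`|v(K) - v(K₃)|² = (1 + θ²) δ² / ε²`. For the quadratic Taylor polynomial the second difference is
exactly `x₂ᵀ H x₅ = ε² ((θ - 1) H₀₀ + H₀₁)`, and the Taylor remainder perturbs it by `O(ε³)`;
the cubic bound on the remainder is only given on the unit ball, which the points `εxᵢ` may leave,
and continuity of `h` extends it to any ball.
-/

open Matrix

/-- The lift of a point of the plane onto the graph of `h`. -/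
noncomputable def liftPt (h : (Fin 2 → ℝ) → ℝ) (x : Fin 2 → ℝ) : Fin 3 → ℝ :=
  ![x 0, x 1, h x]

def secondDiff {E : Type*} [Add E] [Zero E] (f : E → ℝ) (x y : E) : ℝ :=
  f (x + y) - f x - f y + f 0

noncomputable def quadModel {ι : Type*} [Fintype ι] (p : ι → ℝ) (H : Matrix ι ι ℝ)
    (x : ι → ℝ) : ℝ :=
  p ⬝ᵥ x + (1 / 2) * (x ⬝ᵥ (H *ᵥ x))

/-- For the lifted edges `u, w, z` over `x, x + y, y`: `u × w - w × z = (u + z) × w`, where `u + z`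
and `w` share the planar part `x + y`, and `(a, s) × (a, t) = (t - s) • (a₁, -a₀, 0)`. -/
theorem cross_lift_sub_cross_lift (h : (Fin 2 → ℝ) → ℝ) (x y : Fin 2 → ℝ) :
    crossProduct (liftPt h x - liftPt h 0) (liftPt h (x + y) - liftPt h 0) -
        crossProduct (liftPt h (x + y) - liftPt h 0) (liftPt h y - liftPt h 0) =
      secondDiff h x y • ![(x + y) 1, -(x + y) 0, 0] := by
  simp only [liftPt, secondDiff, cross_apply, Pi.zero_apply, Pi.add_apply, sub_cons, sub_zero,
    sub_self, head_cons, tail_cons, cons_val_zero, cons_val_one, cons_val_two, smul_cons,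
    smul_eq_mul, smul_empty, zero_empty, vecCons_inj, and_true]
  exact ⟨by ring, by ring, by ring⟩

theorem dotProduct_self_smul_cross_lift_sub (h : (Fin 2 → ℝ) → ℝ) (x y : Fin 2 → ℝ) (c : ℝ) :
    (c • crossProduct (liftPt h x - liftPt h 0) (liftPt h (x + y) - liftPt h 0) -
        c • crossProduct (liftPt h (x + y) - liftPt h 0) (liftPt h y - liftPt h 0)) ⬝ᵥ
      (c • crossProduct (liftPt h x - liftPt h 0) (liftPt h (x + y) - liftPt h 0) -
        c • crossProduct (liftPt h (x + y) - liftPt h 0) (liftPt h y - liftPt h 0)) =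
      c ^ 2 * secondDiff h x y ^ 2 * ((x + y) 0 ^ 2 + (x + y) 1 ^ 2) := by
  rw [← smul_sub, cross_lift_sub_cross_lift]
  simp only [dotProduct, Fin.sum_univ_three, Pi.smul_apply, smul_eq_mul, cons_val_zero,
    cons_val_one, cons_val_two, head_cons, tail_cons]
  ring

theorem Matrix.IsSymm.dotProduct_mulVec_comm {ι R : Type*} [Fintype ι] [CommSemiring R]
    {H : Matrix ι ι R} (hH : H.IsSymm) (u w : ι → R) : w ⬝ᵥ H *ᵥ u = u ⬝ᵥ H *ᵥ w := by
  rw [dotProduct_mulVec, dotProduct_comm, ← mulVec_transpose, hH.eq]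

theorem continuous_quadModel {ι : Type*} [Fintype ι] (p : ι → ℝ) (H : Matrix ι ι ℝ) :
    Continuous (quadModel p H) := by
  unfold quadModel
  fun_prop

theorem secondDiff_quadModel {ι : Type*} [Fintype ι] (p : ι → ℝ) {H : Matrix ι ι ℝ}
    (hH : H.IsSymm) (u w : ι → ℝ) : secondDiff (quadModel p H) u w = u ⬝ᵥ H *ᵥ w := by
  simp only [secondDiff, quadModel, dotProduct_add, add_dotProduct, mulVec_add,
    hH.dotProduct_mulVec_comm w u, dotProduct_zero, mulVec_zero]
  ring

theorem exists_abs_le_mul_norm_pow_of_continuous {E : Type*} [SeminormedAddCommGroup E]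
    [ProperSpace E] {f : E → ℝ} (hf : Continuous f) {n : ℕ} {C₀ : ℝ}
    (hf₀ : ∀ x, ‖x‖ ≤ 1 → |f x| ≤ C₀ * ‖x‖ ^ n) (R : ℝ) :
    ∃ C ≥ 0, ∀ x, ‖x‖ ≤ R → |f x| ≤ C * ‖x‖ ^ n := by
  obtain ⟨M, hM⟩ := (isCompact_closedBall (0 : E) R).exists_bound_of_continuousOn hf.continuousOn
  refine ⟨max (max C₀ M) 0, le_max_right _ _, fun x hxR => ?_⟩
  rcases le_or_gt ‖x‖ 1 with hx1 | hx1
  · exact (hf₀ x hx1).trans (by gcongr; exact (le_max_left _ _).trans (le_max_left _ _))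
  · calc |f x| ≤ M := by simpa using hM x (by simpa using hxR)
      _ ≤ max (max C₀ M) 0 * 1 := by
        rw [mul_one]; exact (le_max_right _ _).trans (le_max_left _ _)
      _ ≤ max (max C₀ M) 0 * ‖x‖ ^ n := by gcongr; exact one_le_pow₀ hx1.le

theorem abs_secondDiff_smul_le {E : Type*} [SeminormedAddCommGroup E] [NormedSpace ℝ E]
    {f : E → ℝ} {n : ℕ} (hn : n ≠ 0) {C R : ℝ} (hf : ∀ x, ‖x‖ ≤ R → |f x| ≤ C * ‖x‖ ^ n)
    {u w : E} (huw : ‖u‖ + ‖w‖ ≤ R) {ε : ℝ} (hε : 0 ≤ ε) (hε1 : ε ≤ 1) :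
    |secondDiff f (ε • u) (ε • w)| ≤ C * (‖u + w‖ ^ n + ‖u‖ ^ n + ‖w‖ ^ n) * ε ^ n := by
  have hscaled : ∀ x : E, ‖x‖ ≤ R → |f (ε • x)| ≤ C * ‖x‖ ^ n * ε ^ n := by
    intro x hx
    have hnorm : ‖ε • x‖ = ε * ‖x‖ := by rw [norm_smul, Real.norm_of_nonneg hε]
    have := hf (ε • x) (by rw [hnorm]; nlinarith [norm_nonneg x])
    rwa [hnorm, mul_pow, mul_comm (ε ^ n), ← mul_assoc] at this
  have h0 : f 0 = 0 := by
    simpa [hn] using hf 0 (by rw [norm_zero]; linarith [norm_nonneg u, norm_nonneg w])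
  have hsum := hscaled (u + w) ((norm_add_le u w).trans huw)
  have hu := hscaled u (by linarith [norm_nonneg w])
  have hw := hscaled w (by linarith [norm_nonneg u])
  rw [secondDiff, ← smul_add, h0, add_zero]
  calc |f (ε • (u + w)) - f (ε • u) - f (ε • w)|
      ≤ |f (ε • (u + w))| + |f (ε • u)| + |f (ε • w)| :=
        (abs_sub _ _).trans (add_le_add_left (abs_sub _ _) _)
    _ ≤ _ := by linarith

theorem exists_abs_secondDiff_smul_sub_le {ι : Type*} [Fintype ι] {h : (ι → ℝ) → ℝ}
    (hh : Continuous h) {p : ι → ℝ} {H : Matrix ι ι ℝ} (hH : H.IsSymm) {C₀ : ℝ}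
    (htaylor : ∀ x, ‖x‖ ≤ 1 → |h x - quadModel p H x| ≤ C₀ * ‖x‖ ^ 3) (u w : ι → ℝ) :
    ∃ B ≥ 0, ∀ ε : ℝ, 0 < ε → ε ≤ 1 →
      |secondDiff h (ε • u) (ε • w) - ε ^ 2 * (u ⬝ᵥ H *ᵥ w)| ≤ B * ε ^ 3 := by
  obtain ⟨C, hC, hrem⟩ := exists_abs_le_mul_norm_pow_of_continuous
    (hh.sub (continuous_quadModel p H)) htaylor (‖u‖ + ‖w‖)
  refine ⟨C * (‖u + w‖ ^ 3 + ‖u‖ ^ 3 + ‖w‖ ^ 3), by positivity, fun ε hε hε1 => ?_⟩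
  have hsplit : secondDiff h (ε • u) (ε • w) - ε ^ 2 * (u ⬝ᵥ H *ᵥ w) =
      secondDiff (h - quadModel p H) (ε • u) (ε • w) := by
    have hq := secondDiff_quadModel p hH (ε • u) (ε • w)
    rw [smul_dotProduct, mulVec_smul, dotProduct_smul] at hq
    simp only [secondDiff, Pi.sub_apply, smul_eq_mul] at hq ⊢
    linear_combination hq
  rw [hsplit]
  exact abs_secondDiff_smul_le three_ne_zero hrem le_rfl hε.le hε1

theorem abs_sq_div_sq_sub_le {δ a B ε : ℝ} (hε : 0 < ε) (hε1 : ε ≤ 1)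
    (hδ : |δ - ε ^ 2 * a| ≤ B * ε ^ 3) :
    |δ ^ 2 / ε ^ 2 - ε ^ 2 * a ^ 2| ≤ (B ^ 2 + 2 * |a| * B) * ε ^ 3 := by
  set r := δ - ε ^ 2 * a
  have hexpand : δ ^ 2 / ε ^ 2 - ε ^ 2 * a ^ 2 = r ^ 2 / ε ^ 2 + 2 * a * r := by
    simp only [r]; field_simp; ring
  have hsq : r ^ 2 / ε ^ 2 ≤ B ^ 2 * ε ^ 3 := by
    rw [div_le_iff₀ (by positivity)]
    calc r ^ 2 = |r| ^ 2 := (sq_abs r).symm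
      _ ≤ (B * ε ^ 3) ^ 2 := by gcongr
      _ = B ^ 2 * ε ^ 4 * ε ^ 2 := by ring
      _ ≤ B ^ 2 * ε ^ 3 * ε ^ 2 := by
        gcongr _ * ?_ * _
        exact pow_le_pow_of_le_one hε.le hε1 (by norm_num)
  have hlin : |2 * a * r| ≤ 2 * |a| * (B * ε ^ 3) := by
    rw [abs_mul, abs_mul, abs_two]; gcongr
  rw [hexpand]
  calc |r ^ 2 / ε ^ 2 + 2 * a * r| ≤ |r ^ 2 / ε ^ 2| + |2 * a * r| := abs_add_le _ _
    _ ≤ B ^ 2 * ε ^ 3 + 2 * |a| * (B * ε ^ 3) := by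
      rw [abs_of_nonneg (by positivity)]; gcongr
    _ = (B ^ 2 + 2 * |a| * B) * ε ^ 3 := by ring

/-- The Taylor expansion computation for the normals of the triangles `K` (with vertices
over `x₀ = (0,0)`, `x₂ = ε(1,0)`, `x₄ = ε(θ,1)`) and `K₃` (with vertices over
`x₀, x₄, x₅ = ε(θ-1,1)`): writing `v(K) = ε⁻²(y₂-y₀)×(y₄-y₀)` and
`v(K₃) = ε⁻²(y₄-y₀)×(y₅-y₀)` for the lifted points `yᵢ = (xᵢ, h(xᵢ))`, one has
`|v(K) - v(K₃)|² = ε²(θ²|(θ-1)∂₁₁h(0) + ∂₁₂h(0)|² + |(θ-1)∂₁₁h(0) + ∂₁₂h(0)|²) + O(ε³)`. -/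
theorem normal_difference_taylor_expansion
    (θ : ℝ) (h : (Fin 2 → ℝ) → ℝ) (hsmooth : ContDiff ℝ 3 h)
    (p : Fin 2 → ℝ) (H : Matrix (Fin 2) (Fin 2) ℝ) (hsymm : H.IsSymm)
    -- `p = ∇h(0)`, `H = ∇²h(0)`: second-order Taylor expansion of `h` at `0`
    (htaylor : ∃ C₀ > (0 : ℝ), ∀ x : Fin 2 → ℝ, ‖x‖ ≤ 1 →
      |h x - (p ⬝ᵥ x + (1 / 2) * (x ⬝ᵥ (H *ᵥ x)))| ≤ C₀ * ‖x‖ ^ 3) :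
    ∃ C > (0 : ℝ), ∀ ε : ℝ, 0 < ε → ε ≤ 1 →
      abs ((((ε ^ 2)⁻¹ • (crossProduct (liftPt h (ε • ![1, 0]) - liftPt h 0)
              (liftPt h (ε • ![θ, 1]) - liftPt h 0)) -
            (ε ^ 2)⁻¹ • (crossProduct (liftPt h (ε • ![θ, 1]) - liftPt h 0)
              (liftPt h (ε • ![θ - 1, 1]) - liftPt h 0))) ⬝ᵥ
          ((ε ^ 2)⁻¹ • (crossProduct (liftPt h (ε • ![1, 0]) - liftPt h 0)
              (liftPt h (ε • ![θ, 1]) - liftPt h 0)) -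
            (ε ^ 2)⁻¹ • (crossProduct (liftPt h (ε • ![θ, 1]) - liftPt h 0)
              (liftPt h (ε • ![θ - 1, 1]) - liftPt h 0))) -
        ε ^ 2 * (θ ^ 2 * ((θ - 1) * H 0 0 + H 0 1) ^ 2 +
          ((θ - 1) * H 0 0 + H 0 1) ^ 2))) ≤ C * ε ^ 3 := by
  obtain ⟨C₀, -, hC₀⟩ := htaylor
  obtain ⟨B, hB, hδ⟩ :=
    exists_abs_secondDiff_smul_sub_le hsmooth.continuous hsymm hC₀ ![1, 0] ![θ - 1, 1]
  set A := (θ - 1) * H 0 0 + H 0 1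
  have hA : ![1, 0] ⬝ᵥ H *ᵥ ![θ - 1, 1] = A := by
    simp [A, dotProduct, mulVec, Fin.sum_univ_two, mul_comm]
  refine ⟨(1 + θ ^ 2) * (B ^ 2 + 2 * |A| * B) + 1, by positivity, fun ε hε hε1 => ?_⟩
  set δ := secondDiff h (ε • ![1, 0]) (ε • ![θ - 1, 1])
  have hsum : ε • ![θ, 1] = ε • ![1, 0] + ε • ![θ - 1, 1] := by
    rw [← smul_add]; congr 1; ext i; fin_cases i <;> simp
  have hexpand : (ε ^ 2)⁻¹ ^ 2 * δ ^ 2 * ((ε • ![1, 0] + ε • ![θ - 1, 1] : Fin 2 → ℝ) 0 ^ 2 +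
        (ε • ![1, 0] + ε • ![θ - 1, 1] : Fin 2 → ℝ) 1 ^ 2) - ε ^ 2 * (θ ^ 2 * A ^ 2 + A ^ 2) =
      (1 + θ ^ 2) * (δ ^ 2 / ε ^ 2 - ε ^ 2 * A ^ 2) := by
    simp only [smul_cons, smul_eq_mul, mul_one, mul_zero, smul_empty, Pi.add_apply,
      cons_val_zero, cons_val_one]
    field_simp
    ring
  rw [hsum, dotProduct_self_smul_cross_lift_sub, hexpand, abs_mul, abs_of_pos (by positivity)]
  calc (1 + θ ^ 2) * |δ ^ 2 / ε ^ 2 - ε ^ 2 * A ^ 2|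
      ≤ (1 + θ ^ 2) * ((B ^ 2 + 2 * |A| * B) * ε ^ 3) := by
        gcongr
        exact abs_sq_div_sq_sub_le hε hε1 (hA ▸ hδ ε hε hε1)
    _ ≤ ((1 + θ ^ 2) * (B ^ 2 + 2 * |A| * B) + 1) * ε ^ 3 := by nlinarith [pow_pos hε 3]
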